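/- arXiv:2301.11971 — 9 statements merged into one kernel-verified Lean document; each statement's English description precedes it below -/
import Mathlib

section
/- Let Θ be a nonempty finite type, let χ ∈ [0,1], let μ : Θ → ℝ be nonnegative with ∑_{θ∈Θ} μ(θ) = 1, and let σ : Θ → ℝ be nonnegative with σ̄ := ∑_{θ∈Θ} μ(θ)·σ(θ) > 0. Define the χ-cursed likelihood σ^χ(θ) := χ·σ̄ + (1-χ)·σ(θ). Then ∑_{θ∈Θ} μ(θ)·σ^χ(θ) = σ̄, and for every θ ∈ Θ the χ-cursed posterior satisfies μ(θ)·σ^χ(θ) / (∑_{θ'∈Θ} μ(θ')·σ^χ(θ')) = χ·μ(θ) + (1-χ)·( μ(θ)·σ(θ) / ∑_{θ'∈Θ} μ(θ')·σ(θ') ). -/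
/-! Averaging the cursed likelihood against the prior `μ` returns `σ̄`, because `μ` sums to one;
so the cursed posterior has the same normaliser as the Bayesian one, and it splits linearly
into `χ` times the prior plus `1 - χ` times the Bayesian posterior. -/

open Finset

theorem Finset.sum_mul_affine_combination {ι R : Type*} [CommRing R] (s : Finset ι)
    (μ σ : ι → R) (hμ : ∑ i ∈ s, μ i = 1) (χ c : R) :
    ∑ i ∈ s, μ i * (χ * c + (1 - χ) * σ i) = χ * c + (1 - χ) * ∑ i ∈ s, μ i * σ i := by
  calc ∑ i ∈ s, μ i * (χ * c + (1 - χ) * σ i)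
      = (∑ i ∈ s, μ i) * (χ * c) + (1 - χ) * ∑ i ∈ s, μ i * σ i := by
        rw [sum_mul, mul_sum, ← sum_add_distrib]
        exact sum_congr rfl fun i _ => by ring
    _ = χ * c + (1 - χ) * ∑ i ∈ s, μ i * σ i := by rw [hμ, one_mul]

theorem Finset.sum_mul_cursed_likelihood {ι R : Type*} [CommRing R] (s : Finset ι)
    (μ σ : ι → R) (hμ : ∑ i ∈ s, μ i = 1) (χ : R) :
    ∑ i ∈ s, μ i * (χ * ∑ j ∈ s, μ j * σ j + (1 - χ) * σ i) = ∑ j ∈ s, μ j * σ j := by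
  rw [sum_mul_affine_combination s μ σ hμ]
  ring

theorem cursed_posterior_eq {K : Type*} [Field K] (χ m x S : K) (hS : S ≠ 0) :
    m * (χ * S + (1 - χ) * x) / S = χ * m + (1 - χ) * (m * x / S) := by
  field_simp

theorem cursed_bayes_rearrange_general {Θ : Type*} [Fintype Θ]
    (χ : ℝ)
    (μ σ : Θ → ℝ) (hμsum : ∑ θ, μ θ = 1)
    (hbar : 0 < ∑ θ, μ θ * σ θ) :
    (∑ θ, μ θ * (χ * (∑ θ', μ θ' * σ θ') + (1 - χ) * σ θ)) = (∑ θ', μ θ' * σ θ') ∧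
    ∀ θ, μ θ * (χ * (∑ θ', μ θ' * σ θ') + (1 - χ) * σ θ) /
        (∑ θ', μ θ' * (χ * (∑ θ'', μ θ'' * σ θ'') + (1 - χ) * σ θ')) =
      χ * μ θ + (1 - χ) * (μ θ * σ θ / ∑ θ', μ θ' * σ θ') := by
  have hnormaliser := sum_mul_cursed_likelihood univ μ σ hμsum χ
  refine ⟨hnormaliser, fun θ => ?_⟩
  rw [hnormaliser]
  exact cursed_posterior_eq χ (μ θ) (σ θ) _ hbar.ne'

theorem cursed_bayes_rearrange {Θ : Type*} [Fintype Θ] [Nonempty Θ]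
    (χ : ℝ) (hχ0 : 0 ≤ χ) (hχ1 : χ ≤ 1)
    (μ σ : Θ → ℝ) (hμ : ∀ θ, 0 ≤ μ θ) (hμsum : ∑ θ, μ θ = 1)
    (hσ : ∀ θ, 0 ≤ σ θ) (hbar : 0 < ∑ θ, μ θ * σ θ) :
    (∑ θ, μ θ * (χ * (∑ θ', μ θ' * σ θ') + (1 - χ) * σ θ)) = (∑ θ', μ θ' * σ θ') ∧
    ∀ θ, μ θ * (χ * (∑ θ', μ θ' * σ θ') + (1 - χ) * σ θ) /
        (∑ θ', μ θ' * (χ * (∑ θ'', μ θ'' * σ θ'') + (1 - χ) * σ θ')) =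
      χ * μ θ + (1 - χ) * (μ θ * σ θ / ∑ θ', μ θ' * σ θ') :=
  cursed_bayes_rearrange_general χ μ σ hμsum hbar
end

section
/- Let Θ be a nonempty finite type, let χ ∈ [0,1], let μ : Θ → ℝ be nonnegative with ∑_{θ∈Θ} μ(θ) = 1, and let σ : Θ → ℝ be nonnegative with σ̄ := ∑_{θ∈Θ} μ(θ)·σ(θ) > 0. Define σ^χ(θ) := χ·σ̄ + (1-χ)·σ(θ). Then for every θ ∈ Θ, the χ-cursed posterior satisfies μ(θ)·σ^χ(θ) / (∑_{θ'∈Θ} μ(θ')·σ^χ(θ')) ≥ χ·μ(θ) (the χ-dampened updating property). -/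
theorem cursed_bayes_dampened_updating {Θ : Type*} [Fintype Θ] [Nonempty Θ]
    (χ : ℝ) (hχ0 : 0 ≤ χ) (hχ1 : χ ≤ 1)
    (μ σ : Θ → ℝ) (hμ : ∀ θ, 0 ≤ μ θ) (hμsum : ∑ θ, μ θ = 1)
    (hσ : ∀ θ, 0 ≤ σ θ) (hbar : 0 < ∑ θ, μ θ * σ θ) :
    ∀ θ, μ θ * (χ * (∑ θ', μ θ' * σ θ') + (1 - χ) * σ θ) /
        (∑ θ', μ θ' * (χ * (∑ θ'', μ θ'' * σ θ'') + (1 - χ) * σ θ')) ≥ χ * μ θ := by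
  intro θ
  set S : ℝ := ∑ θ', μ θ' * σ θ' with hS
  have hden : (∑ θ', μ θ' * (χ * S + (1 - χ) * σ θ')) = S := by
    have h := Finset.sum_congr rfl (fun x (_ : x ∈ Finset.univ) =>
      show μ x * (χ * S + (1 - χ) * σ x) = χ * S * μ x + (1 - χ) * (μ x * σ x) by ring)
    rw [h, Finset.sum_add_distrib, ← Finset.mul_sum, ← Finset.mul_sum, hμsum, ← hS]; ring
  rw [hden, ge_iff_le, le_div_iff₀ hbar]
  have h1 : χ * μ θ * S ≤ μ θ * (χ * S) :=
    le_of_eq (by ring)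
  have h2 : μ θ * (χ * S) ≤ μ θ * (χ * S + (1 - χ) * σ θ) := by
    apply mul_le_mul_of_nonneg_left _ (hμ θ)
    nlinarith [hσ θ]
  linarith
end

section
/- Let N ≥ 2 be a natural number, let K > 1 be real, and let χ ∈ (0,1). Then there exists a unique C ∈ (0,1) such that C − χ·(C/K)^{N−1} = 1 − χ. -/
lemma pgg_aux (a b : ℝ) (ha : 0 ≤ a) (hab : a ≤ b) (hb : b ≤ 1) :
    ∀ n : ℕ, (1 - a) * b ^ n - (1 - b) * a ^ n ≤ b - a := by
  intro n
  induction n with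
  | zero => simp
  | succ n ih =>
    have han : (0:ℝ) ≤ a ^ n := pow_nonneg ha n
    have han1 : a ^ n ≤ 1 := pow_le_one₀ ha (hab.trans hb)
    have hb0 : 0 ≤ b := ha.trans hab
    have h2 : (1 - b) * ((b - a) * a ^ n) ≤ (1 - b) * ((b - a) * 1) :=
      mul_le_mul_of_nonneg_left
        (mul_le_mul_of_nonneg_left han1 (sub_nonneg.2 hab)) (sub_nonneg.2 hb)
    have h1 := mul_le_mul_of_nonneg_left ih hb0
    simp only [pow_succ]
    nlinarith [h1, h2]

theorem pgg_cutoff_exists_unique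
    (N : ℕ) (hN : 2 ≤ N) (K : ℝ) (hK : 1 < K) (χ : ℝ) (hχ : χ ∈ Set.Ioo (0:ℝ) 1) :
    ∃! C : ℝ, C ∈ Set.Ioo (0:ℝ) 1 ∧ C - χ * (C / K) ^ (N - 1) = 1 - χ := by
  obtain ⟨hχ0, hχ1⟩ := hχ
  set n := N - 1 with hn
  have hn1 : 1 ≤ n := by omega
  have hK0 : (0:ℝ) < K := lt_trans zero_lt_one hK
  have hKn : 1 < K ^ n := one_lt_pow₀ hK (by omega)
  -- existence
  have hcont : ContinuousOn (fun C : ℝ => C - χ * (C / K) ^ n) (Set.Icc 0 1) := by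
    fun_prop
  have hmem : (1 - χ) ∈ Set.Ioo ((fun C : ℝ => C - χ * (C / K) ^ n) 0)
      ((fun C : ℝ => C - χ * (C / K) ^ n) 1) := by
    constructor
    · simp only [zero_div, zero_pow (by omega : n ≠ 0), mul_zero, sub_zero]
      linarith
    · simp only
      have h1 : (1 / K) ^ n < 1 := pow_lt_one₀ (by positivity) (by
        rw [div_lt_one hK0]; exact hK) (by omega)
      have : χ * (1 / K) ^ n < χ := by
        nlinarith [pow_pos (show (0:ℝ) < 1 / K by positivity) n]
      linarith
  obtain ⟨C, hCmem, hCeq⟩ := intermediate_value_Ioo (by norm_num : (0:ℝ) ≤ 1) hcont hmem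
  -- key uniqueness step
  have key : ∀ C₁ C₂ : ℝ, (C₁ ∈ Set.Ioo (0:ℝ) 1 ∧ C₁ - χ * (C₁ / K) ^ n = 1 - χ) →
      (C₂ ∈ Set.Ioo (0:ℝ) 1 ∧ C₂ - χ * (C₂ / K) ^ n = 1 - χ) → C₁ ≤ C₂ → C₁ = C₂ := by
    rintro C₁ C₂ ⟨⟨h10, h11⟩, he1⟩ ⟨⟨h20, h21⟩, he2⟩ hle
    by_contra hne
    have hlt : C₁ < C₂ := lt_of_le_of_ne hle hne
    have hKnpos : (0:ℝ) < K ^ n := by positivity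
    -- rewrite equations: χ * (K^n - Cᵢ^n) = K^n * (1 - Cᵢ)
    have e1 : χ * (K ^ n - C₁ ^ n) = K ^ n * (1 - C₁) := by
      have := he1
      rw [div_pow] at this
      field_simp at this
      nlinarith [this]
    have e2 : χ * (K ^ n - C₂ ^ n) = K ^ n * (1 - C₂) := by
      have := he2
      rw [div_pow] at this
      field_simp at this
      nlinarith [this]
    have cross : K ^ n * (1 - C₁) * (K ^ n - C₂ ^ n)
        = K ^ n * (1 - C₂) * (K ^ n - C₁ ^ n) := by
      calc K ^ n * (1 - C₁) * (K ^ n - C₂ ^ n)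
          = χ * (K ^ n - C₁ ^ n) * (K ^ n - C₂ ^ n) := by rw [e1]
        _ = χ * (K ^ n - C₂ ^ n) * (K ^ n - C₁ ^ n) := by ring
        _ = K ^ n * (1 - C₂) * (K ^ n - C₁ ^ n) := by rw [e2]
    have cross' : (1 - C₁) * (K ^ n - C₂ ^ n) = (1 - C₂) * (K ^ n - C₁ ^ n) := by
      have := mul_left_cancel₀ (ne_of_gt hKnpos) (by linarith [cross] ; )
      nlinarith [cross, hKnpos]
    -- K^n * (C₂ - C₁) = (1-C₁)C₂^n - (1-C₂)C₁^n ≤ C₂ - C₁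
    have haux := pgg_aux C₁ C₂ (le_of_lt h10) hle (le_of_lt h21) n
    nlinarith [cross', haux, hKnpos]
  refine ⟨C, ⟨hCmem, hCeq⟩, ?_⟩
  intro C' hC'
  rcases le_total C' C with h | h
  · exact key C' C hC' ⟨hCmem, hCeq⟩ h
  · exact (key C C' ⟨hCmem, hCeq⟩ hC' h).symm
end

section
/- Let K > 1 be real, χ ∈ (0,1), and N ≥ 2 a natural number. Suppose C_N ∈ (0,1) satisfies C_N − χ·(C_N/K)^{N−1} = 1 − χ and C_{N+1} ∈ (0,1) satisfies C_{N+1} − χ·(C_{N+1}/K)^{N} = 1 − χ. Then C_{N+1} < C_N. -/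
/-!
Write `g_n(C) = C - χ (C/K)^n` (`cutoffMap χ K n`), so that `C_N` solves `g_{N-1} = 1 - χ` and `C_{N+1}` solves
`g_N = 1 - χ`. Since `(C/K)^N < (C/K)^{N-1}`, we get `g_{N-1}(C_{N+1}) < g_N(C_{N+1}) = 1 - χ`.
On the other hand `g_{N-1}` is concave with `g_{N-1}(C_N) = 1 - χ < g_{N-1}(1)`, so by the
minimum principle `g_{N-1} ≥ 1 - χ` on `[C_N, 1]`; hence `C_{N+1} ∉ [C_N, 1]`.
-/

open Set

noncomputable def cutoffMap (χ K : ℝ) (n : ℕ) (C : ℝ) : ℝ := C - χ * (C / K) ^ n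

section CutoffMap

variable {χ K : ℝ}

lemma concaveOn_cutoffMap (hχ : 0 ≤ χ) (hK : 0 ≤ K) (n : ℕ) :
    ConcaveOn ℝ (Ici 0) (cutoffMap χ K n) := by
  have hpow : ConvexOn ℝ (Ici 0) fun C : ℝ => χ * (K⁻¹ ^ n * C ^ n) :=
    ((convexOn_pow n).smul (by positivity)).smul hχ
  refine ((concaveOn_id (convex_Ici 0)).sub hpow).congr fun C _ => ?_
  simp only [cutoffMap, Pi.sub_apply, id, div_eq_mul_inv, mul_pow, mul_comm]

lemma cutoffMap_lt_cutoffMap_succ (hχ : 0 < χ) {C : ℝ} (hC : 0 < C) (hCK : C < K) (n : ℕ) :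
    cutoffMap χ K n C < cutoffMap χ K (n + 1) C := by
  have hx : C / K < 1 := (div_lt_one (hC.trans hCK)).2 hCK
  have : (C / K) ^ (n + 1) < (C / K) ^ n :=
    pow_lt_pow_right_of_lt_one₀ (div_pos hC (hC.trans hCK)) hx n.lt_succ_self
  unfold cutoffMap
  nlinarith

lemma sub_lt_cutoffMap_one (hχ : 0 < χ) (hK : 1 < K) {n : ℕ} (hn : n ≠ 0) :
    1 - χ < cutoffMap χ K n 1 := by
  have : (1 / K) ^ n < 1 := pow_lt_one₀ (by positivity) ((div_lt_one (by linarith)).2 hK) hn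
  unfold cutoffMap
  nlinarith

end CutoffMap

theorem pgg_cutoff_strict_anti_in_N
    (K : ℝ) (hK : 1 < K) (χ : ℝ) (hχ : χ ∈ Set.Ioo (0:ℝ) 1)
    (N : ℕ) (hN : 2 ≤ N)
    (CN CN1 : ℝ) (hCN : CN ∈ Set.Ioo (0:ℝ) 1) (hCN1 : CN1 ∈ Set.Ioo (0:ℝ) 1)
    (heqN : CN - χ * (CN / K) ^ (N - 1) = 1 - χ)
    (heqN1 : CN1 - χ * (CN1 / K) ^ N = 1 - χ) :
    CN1 < CN := by
  obtain ⟨n, rfl⟩ : ∃ n, N = n + 1 := ⟨N - 1, by omega⟩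
  have hg_CN : cutoffMap χ K n CN = 1 - χ := heqN
  have hg_CN1 : cutoffMap χ K n CN1 < 1 - χ :=
    heqN1 ▸ cutoffMap_lt_cutoffMap_succ hχ.1 hCN1.1 (hCN1.2.trans hK) n
  have hg_one : 1 - χ < cutoffMap χ K n 1 := sub_lt_cutoffMap_one hχ.1 hK (by omega)
  by_contra! hle
  have hmin := (concaveOn_cutoffMap hχ.1.le (zero_le_one.trans hK.le) n).min_le_of_mem_Icc
    (mem_Ici.2 hCN.1.le) (mem_Ici.2 zero_le_one) ⟨hle, hCN1.2.le⟩
  rw [hg_CN, min_eq_left hg_one.le] at hmin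
  exact hg_CN1.not_ge hmin
end

section
/- Let N ≥ 2 be a natural number, χ ∈ (0,1), and 1 < K < K' reals. Suppose C ∈ (0,1) satisfies C − χ·(C/K)^{N−1} = 1 − χ and C' ∈ (0,1) satisfies C' − χ·(C'/K')^{N−1} = 1 − χ. Then C' < C. -/
/-!
For fixed `χ` and `n = N - 1`, write `f_K x = x - χ (x / K) ^ n`, so that the cutoffs are roots
`f_K C = f_{K'} C' = 1 - χ`. For `x > 0` the value `f_K x` strictly increases in `K`, hence
`f_{K'} C > 1 - χ`, and also `f_{K'} 1 > f_1 1 = 1 - χ`. Since `f_{K'}` is concave on `[0, ∞)`,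
it stays above `1 - χ` on all of `[C, 1]`, so its root `C' < 1` must lie below `C`.
-/

lemma concaveOn_sub_mul_div_pow {χ K : ℝ} (hχ : 0 ≤ χ) (hK : 0 ≤ K) (n : ℕ) :
    ConcaveOn ℝ (Set.Ici 0) fun x : ℝ => x - χ * (x / K) ^ n := by
  have hconvex : ConvexOn ℝ (Set.Ici 0) fun x : ℝ => (χ / K ^ n) • x ^ n :=
    (convexOn_pow n).smul (by positivity)
  refine (concaveOn_id (convex_Ici 0)).sub (hconvex.congr fun x _ => ?_)
  simp only [smul_eq_mul, div_pow]
  ring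

lemma sub_mul_div_pow_lt_of_lt {χ x K K' : ℝ} {n : ℕ} (hχ : 0 < χ) (hx : 0 < x) (hK : 0 < K)
    (hKK' : K < K') (hn : n ≠ 0) :
    x - χ * (x / K) ^ n < x - χ * (x / K') ^ n := by
  have hdiv : x / K' < x / K := div_lt_div_of_pos_left hx hK hKK'
  have hpow : (x / K') ^ n < (x / K) ^ n :=
    pow_lt_pow_left₀ hdiv (div_pos hx (hK.trans hKK')).le hn
  linarith [mul_lt_mul_of_pos_left hpow hχ]

theorem pgg_cutoff_strict_anti_in_K
    (N : ℕ) (hN : 2 ≤ N) (χ : ℝ) (hχ : χ ∈ Set.Ioo (0:ℝ) 1)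
    (K K' : ℝ) (hK : 1 < K) (hKK' : K < K')
    (C C' : ℝ) (hC : C ∈ Set.Ioo (0:ℝ) 1) (hC' : C' ∈ Set.Ioo (0:ℝ) 1)
    (heq : C - χ * (C / K) ^ (N - 1) = 1 - χ)
    (heq' : C' - χ * (C' / K') ^ (N - 1) = 1 - χ) :
    C' < C := by
  have hn : N - 1 ≠ 0 := by omega
  have hfC : 1 - χ < C - χ * (C / K') ^ (N - 1) :=
    heq ▸ sub_mul_div_pow_lt_of_lt hχ.1 hC.1 (one_pos.trans hK) hKK' hn
  have hf1 : 1 - χ < 1 - χ * (1 / K') ^ (N - 1) := by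
    simpa using sub_mul_div_pow_lt_of_lt hχ.1 one_pos one_pos (hK.trans hKK') hn
  by_contra! hCC'
  have hconc := concaveOn_sub_mul_div_pow (K := K') hχ.1.le (by linarith) (N - 1)
  have hmin := hconc.min_le_of_mem_Icc (Set.mem_Ici.2 hC.1.le)
    (Set.mem_Ici.2 zero_le_one) ⟨hCC', hC'.2.le⟩
  simp only [heq'] at hmin
  exact (lt_min hfC hf1).not_ge hmin
end

section
/- Let N ≥ 2 be a natural number, K > 1 real, and 0 < χ < χ' < 1. Suppose C ∈ (0,1) satisfies C − χ·(C/K)^{N−1} = 1 − χ and C' ∈ (0,1) satisfies C' − χ'·(C'/K)^{N−1} = 1 − χ'. Then C' < C. -/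
lemma pgg_key_ineq (n : ℕ) (hn : 1 ≤ n) (x y : ℝ) (hx : 0 ≤ x) (hxy : x ≤ y)
    (hy : y ≤ 1) : y ^ n * (1 - x) - x ^ n * (1 - y) ≤ y - x := by
  induction n, hn using Nat.le_induction with
  | base => ring_nf; nlinarith
  | succ n hn ih =>
    have hxn : x ^ n ≤ 1 := pow_le_one₀ hx (hxy.trans hy)
    have hy0 : 0 ≤ y := hx.trans hxy
    have h1 : y ^ (n+1) * (1 - x) - x ^ (n+1) * (1 - y)
        = y * (y ^ n * (1 - x) - x ^ n * (1 - y)) + x ^ n * (1 - y) * (y - x) := by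
      ring
    have h2 : y * (y ^ n * (1 - x) - x ^ n * (1 - y)) ≤ y * (y - x) :=
      mul_le_mul_of_nonneg_left ih hy0
    have h3 : x ^ n * (1 - y) * (y - x) ≤ 1 * (1 - y) * (y - x) := by
      apply mul_le_mul_of_nonneg_right _ (by linarith)
      apply mul_le_mul_of_nonneg_right hxn (by linarith)
    nlinarith

theorem pgg_cutoff_strict_anti_in_chi
    (N : ℕ) (hN : 2 ≤ N) (K : ℝ) (hK : 1 < K)
    (χ χ' : ℝ) (hχ0 : 0 < χ) (hχχ' : χ < χ') (hχ'1 : χ' < 1)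
    (C C' : ℝ) (hC : C ∈ Set.Ioo (0:ℝ) 1) (hC' : C' ∈ Set.Ioo (0:ℝ) 1)
    (heq : C - χ * (C / K) ^ (N - 1) = 1 - χ)
    (heq' : C' - χ' * (C' / K) ^ (N - 1) = 1 - χ') :
    C' < C := by
  obtain ⟨hC0, hC1⟩ := hC
  obtain ⟨hC'0, hC'1⟩ := hC'
  set n := N - 1 with hn_def
  have hn : 1 ≤ n := by omega
  have hK0 : (0:ℝ) < K := by linarith
  have hKn : 1 < K ^ n := one_lt_pow₀ hK (by omega)
  have hKn0 : (0:ℝ) < K ^ n := by linarith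
  -- a := (C/K)^n, b := (C'/K)^n, both in (0,1)
  have ha : (C / K) ^ n = C ^ n / K ^ n := div_pow C K n
  have hb : (C' / K) ^ n = C' ^ n / K ^ n := div_pow C' K n
  have hCn1 : C ^ n < K ^ n := by
    calc C ^ n ≤ 1 := pow_le_one₀ hC0.le hC1.le
    _ < K ^ n := hKn
  have hC'n1 : C' ^ n < K ^ n := by
    calc C' ^ n ≤ 1 := pow_le_one₀ hC'0.le hC'1.le
    _ < K ^ n := hKn
  -- rewrite equations: (1-C) = χ (1 - (C/K)^n), etc.
  have e1 : (1 - C) * K ^ n = χ * (K ^ n - C ^ n) := by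
    rw [ha] at heq
    field_simp at heq
    nlinarith [heq]
  have e2 : (1 - C') * K ^ n = χ' * (K ^ n - C' ^ n) := by
    rw [hb] at heq'
    field_simp at heq'
    nlinarith [heq']
  by_contra h
  push_neg at h  -- h : C ≤ C'
  rcases eq_or_lt_of_le h with heqc | hlt
  · -- C = C' forces χ = χ'
    subst heqc
    have : χ * (K ^ n - C ^ n) = χ' * (K ^ n - C ^ n) := by linarith
    have hpos : 0 < K ^ n - C ^ n := by linarith
    have := mul_right_cancel₀ (ne_of_gt hpos) this
    linarith
  · have key := pgg_key_ineq n hn C C' hC0.le hlt.le hC'1.le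
    -- C'^n (1-C) - C^n (1-C') ≤ C' - C < K^n (C'-C)
    have h4 : C' ^ n * (1 - C) - C ^ n * (1 - C') < K ^ n * (C' - C) := by
      have : C' - C < K ^ n * (C' - C) := by nlinarith
      linarith
    -- hence (1-C')(K^n - C^n) < (1-C)(K^n - C'^n)
    have h5 : (1 - C') * (K ^ n - C ^ n) < (1 - C) * (K ^ n - C' ^ n) := by nlinarith
    -- χ' (K^n - C'^n)(K^n - C^n) < χ (K^n - C^n)(K^n - C'^n)
    have hpa : 0 < K ^ n - C ^ n := by linarith
    have hpb : 0 < K ^ n - C' ^ n := by linarith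
    have h6 : χ' * (K ^ n - C' ^ n) * (K ^ n - C ^ n) < χ * (K ^ n - C ^ n) * (K ^ n - C' ^ n) := by
      calc χ' * (K ^ n - C' ^ n) * (K ^ n - C ^ n)
          = (1 - C') * K ^ n * (K ^ n - C ^ n) := by rw [e2]
        _ < (1 - C) * K ^ n * (K ^ n - C' ^ n) := by nlinarith
        _ = χ * (K ^ n - C ^ n) * (K ^ n - C' ^ n) := by rw [e1]
    have hpos : 0 < (K ^ n - C ^ n) * (K ^ n - C' ^ n) := mul_pos hpa hpb
    have h7 : χ' * ((K ^ n - C ^ n) * (K ^ n - C' ^ n)) < χ * ((K ^ n - C ^ n) * (K ^ n - C' ^ n)) := by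
      ring_nf; ring_nf at h6; linarith
    have : χ' < χ := lt_of_mul_lt_mul_right h7 hpos.le
    linarith
end

section
/- Let p₁, p₂, p₃ > 0 be reals with p₁ + p₂ + p₃ = 1 and let v ∈ (0,1). If χ ∈ [0,1] satisfies χ·(1 − (1−p₁)²) + (1−χ)·p₁/(p₁+p₂) ≤ (1 − p₃²·χ)·v, then every χ' ∈ [0, χ] satisfies χ'·(1 − (1−p₁)²) + (1−χ')·p₁/(p₁+p₂) ≤ (1 − p₃²·χ')·v. -/
theorem voting_sophisticated_downward_closed
    (p₁ p₂ p₃ : ℝ) (hp₁ : 0 < p₁) (hp₂ : 0 < p₂) (hp₃ : 0 < p₃)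
    (hsum : p₁ + p₂ + p₃ = 1) (v : ℝ) (hv : v ∈ Set.Ioo (0:ℝ) 1)
    (χ : ℝ) (hχ : χ ∈ Set.Icc (0:ℝ) 1)
    (h : χ * (1 - (1 - p₁) ^ 2) + (1 - χ) * (p₁ / (p₁ + p₂)) ≤ (1 - p₃ ^ 2 * χ) * v) :
    ∀ χ' ∈ Set.Icc (0:ℝ) χ,
      χ' * (1 - (1 - p₁) ^ 2) + (1 - χ') * (p₁ / (p₁ + p₂)) ≤ (1 - p₃ ^ 2 * χ') * v := by
  intro χ' hχ'
  obtain ⟨hχ0, hχ1⟩ := hχ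
  obtain ⟨h0', hle⟩ := hχ'
  obtain ⟨hv0, hv1⟩ := hv
  have hpp : (0:ℝ) < p₁ + p₂ := by linarith
  set B := p₁ / (p₁ + p₂) with hBdef
  have hBe : B * (p₁ + p₂) = p₁ := div_mul_cancel₀ _ (ne_of_gt hpp)
  set A := 1 - (1 - p₁) ^ 2 with hAdef
  rcases le_or_gt B v with hBv | hBv
  · -- f(0) ≤ 0 case
    rcases eq_or_lt_of_le hχ0 with hz | hzpos
    · have : χ' = 0 := le_antisymm (hz ▸ hle) h0'
      subst this
      nlinarith
    · have key : χ * (χ' * A + (1 - χ') * B - (1 - p₃ ^ 2 * χ') * v)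
          = χ' * (χ * A + (1 - χ) * B - (1 - p₃ ^ 2 * χ) * v)
            + (χ - χ') * (B - v) := by ring
      nlinarith [mul_nonneg h0' (sub_nonneg.mpr h),
        mul_nonneg (sub_nonneg.mpr hle) (sub_nonneg.mpr hBv)]
  · -- v < B leads to contradiction with h
    exfalso
    have hA : A = p₁ * (1 + p₂ + p₃) := by rw [hAdef]; nlinarith
    have hvp : v * (p₁ + p₂) < p₁ := by nlinarith
    rcases le_or_gt 0 (A - B + p₃ ^ 2 * v) with hs | hs
    · nlinarith [mul_nonneg hχ0 hs]
    · -- slope negative: f(χ) ≥ f(1) = A - v(1-p₃²) > 0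
      have hq : p₁ + p₂ = 1 - p₃ := by linarith
      have e : v * (1 - p₃ ^ 2) = (v * (p₁ + p₂)) * (1 + p₃) := by rw [hq]; ring
      have h1 : 0 < A - v * (1 - p₃ ^ 2) := by
        rw [e, hA]
        nlinarith [mul_lt_mul_of_pos_right hvp (by linarith : (0:ℝ) < 1 + p₃),
          mul_pos hp₁ hp₂]
      nlinarith [mul_nonneg (sub_nonneg.mpr hχ1) (le_of_lt (neg_pos.mpr hs))]
end

section
/- Let p₁, p₂, p₃ > 0 be reals with p₁ + p₂ + p₃ = 1 and let v ∈ (0,1). For χ ∈ [0,1], say S(χ) holds if χ·(1 − (1−p₁)²) + (1−χ)·p₁/(p₁+p₃) ≥ (1 − p₃²·χ)·v. Then: (i) if v > p₁/(p₁+p₃), S is upward closed on [0,1], i.e. for all 0 ≤ χ ≤ χ' ≤ 1, S(χ) implies S(χ'); (ii) if v < p₁/(p₁+p₃), S is downward closed on [0,1], i.e. for all 0 ≤ χ' ≤ χ ≤ 1, S(χ) implies S(χ'). -/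
theorem voting_sincere_threshold
    (p₁ p₂ p₃ : ℝ) (hp₁ : 0 < p₁) (hp₂ : 0 < p₂) (hp₃ : 0 < p₃)
    (hsum : p₁ + p₂ + p₃ = 1) (v : ℝ) (hv : v ∈ Set.Ioo (0:ℝ) 1) :
    let S : ℝ → Prop := fun χ =>
      χ * (1 - (1 - p₁) ^ 2) + (1 - χ) * (p₁ / (p₁ + p₃)) ≥ (1 - p₃ ^ 2 * χ) * v
    (v > p₁ / (p₁ + p₃) →
      ∀ χ χ' : ℝ, 0 ≤ χ → χ ≤ χ' → χ' ≤ 1 → S χ → S χ') ∧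
    (v < p₁ / (p₁ + p₃) →
      ∀ χ χ' : ℝ, 0 ≤ χ' → χ' ≤ χ → χ ≤ 1 → S χ → S χ') := by
  intro S
  set c : ℝ := p₁ / (p₁ + p₃) with hc
  set K : ℝ := (1 - (1 - p₁) ^ 2) - c + p₃ ^ 2 * v with hK
  have hSiff : ∀ χ : ℝ, S χ ↔ χ * K + (c - v) ≥ 0 := by
    intro χ
    unfold S K
    constructor <;> intro h <;> nlinarith [h]
  constructor
  · intro hvgt χ χ' h0 hle h1 hS
    rw [hSiff] at hS ⊢
    have hKpos : 0 < K := by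
      by_contra h
      push_neg at h
      nlinarith [mul_nonpos_of_nonneg_of_nonpos h0 h]
    nlinarith [mul_nonneg (sub_nonneg.2 hle) hKpos.le]
  · intro hvlt χ χ' h0' hle h1 hS
    rw [hSiff] at hS ⊢
    rcases le_or_gt 0 K with hK0 | hK0
    · nlinarith [mul_nonneg h0' hK0]
    · nlinarith [mul_nonneg (sub_nonneg.2 hle) (neg_nonneg.2 hK0.le)]
end

section
/- Let δ ∈ (0,1), χ ∈ (0,1], and α > 0 be reals. Set B := (1+α)(1+δχ) − αδ and D := B² − 4δχ(1+α). Then D > 0, the number κ := (B − √D)/(2δχ(1+α)) lies in (0,1), and for F(y) = δχ·y² + (δ(1−χ) − δ/(1+α) − 1)·y + 1/(1+α) one has F(κ) = 0; moreover, for every y ∈ [0,1], F(y) ≥ 0 if and only if y ≤ κ. -/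
/-!
Up to the positive factor `1 + α`, `F` is the quadratic `q(y) = A y² - B y + 1` with
`A = δχ(1+α) > 0`. Since `q(0) = 1 > 0` and `q(1) = -α(1-δ) < 0`, the point `1` lies strictly
between the two real roots of `q`; hence `κ`, the smaller root, lies in `(0, 1)`, and on `[0, 1]`
the sign of `q(y) = A (y - κ) (y - κ⁺)` is that of `κ - y`.
-/

namespace Quadratic

variable {a b c : ℝ}

noncomputable def lowerRoot (a b c : ℝ) : ℝ := (-b - √(discrim a b c)) / (2 * a)

noncomputable def upperRoot (a b c : ℝ) : ℝ := (-b + √(discrim a b c)) / (2 * a)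

theorem discrim_pos_of_eval_neg (ha : 0 < a) {x : ℝ} (hx : a * (x * x) + b * x + c < 0) :
    0 < discrim a b c := by
  have hsq : discrim a b c = (2 * a * x + b) ^ 2 - 4 * a * (a * (x * x) + b * x + c) := by
    rw [discrim]; ring
  rw [hsq]
  nlinarith [sq_nonneg (2 * a * x + b), mul_pos ha (neg_pos.2 hx)]

theorem eval_eq_mul_sub_lowerRoot_mul_sub_upperRoot (ha : a ≠ 0) (hd : 0 ≤ discrim a b c)
    (x : ℝ) : a * (x * x) + b * x + c = a * (x - lowerRoot a b c) * (x - upperRoot a b c) := by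
  have hs : √(discrim a b c) ^ 2 = b ^ 2 - 4 * a * c := by rw [Real.sq_sqrt hd, discrim]
  rw [lowerRoot, upperRoot]
  field_simp
  linear_combination hs

theorem eval_lowerRoot (ha : a ≠ 0) (hd : 0 ≤ discrim a b c) :
    a * (lowerRoot a b c * lowerRoot a b c) + b * lowerRoot a b c + c = 0 := by
  rw [eval_eq_mul_sub_lowerRoot_mul_sub_upperRoot ha hd, sub_self, mul_zero, zero_mul]

theorem lowerRoot_le_upperRoot (ha : 0 < a) : lowerRoot a b c ≤ upperRoot a b c := by
  rw [lowerRoot, upperRoot]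
  gcongr
  linarith [Real.sqrt_nonneg (discrim a b c)]

theorem mem_Ioo_of_eval_neg (ha : 0 < a) {x : ℝ} (hx : a * (x * x) + b * x + c < 0) :
    x ∈ Set.Ioo (lowerRoot a b c) (upperRoot a b c) := by
  have hd := (discrim_pos_of_eval_neg ha hx).le
  rw [eval_eq_mul_sub_lowerRoot_mul_sub_upperRoot ha.ne' hd, mul_assoc] at hx
  replace hx := mul_neg_iff.1 (neg_of_mul_neg_right hx ha.le)
  have := lowerRoot_le_upperRoot (b := b) (c := c) ha
  constructor <;> rcases hx with hx | hx <;> linarith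

theorem eval_eq_mul_upperRoot_sub_mul_lowerRoot_sub (ha : 0 < a) (hd : 0 ≤ discrim a b c) (x : ℝ) :
    a * (x * x) + b * x + c = a * (upperRoot a b c - x) * (lowerRoot a b c - x) := by
  rw [eval_eq_mul_sub_lowerRoot_mul_sub_upperRoot ha.ne' hd]
  ring

theorem eval_nonneg_iff_le_lowerRoot (ha : 0 < a) (hd : 0 ≤ discrim a b c) {x : ℝ}
    (hx : x < upperRoot a b c) : 0 ≤ a * (x * x) + b * x + c ↔ x ≤ lowerRoot a b c := by
  rw [eval_eq_mul_upperRoot_sub_mul_lowerRoot_sub ha hd, mul_nonneg_iff_of_pos_left (by nlinarith), sub_nonneg]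

theorem eval_pos_iff_lt_lowerRoot (ha : 0 < a) (hd : 0 ≤ discrim a b c) {x : ℝ}
    (hx : x < upperRoot a b c) : 0 < a * (x * x) + b * x + c ↔ x < lowerRoot a b c := by
  rw [eval_eq_mul_upperRoot_sub_mul_lowerRoot_sub ha hd, mul_pos_iff_of_pos_left (by nlinarith), sub_pos]

end Quadratic

open Quadratic in
theorem dirty_faces_kappa_cutoff
    (δ χ α : ℝ) (hδ : δ ∈ Set.Ioo (0:ℝ) 1) (hχ : χ ∈ Set.Ioc (0:ℝ) 1) (hα : 0 < α) :
    0 < ((1 + α) * (1 + δ * χ) - α * δ) ^ 2 - 4 * δ * χ * (1 + α) ∧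
    (((1 + α) * (1 + δ * χ) - α * δ) -
        Real.sqrt (((1 + α) * (1 + δ * χ) - α * δ) ^ 2 - 4 * δ * χ * (1 + α))) /
      (2 * δ * χ * (1 + α)) ∈ Set.Ioo (0:ℝ) 1 ∧
    (fun y : ℝ => δ * χ * y ^ 2 + (δ * (1 - χ) - δ / (1 + α) - 1) * y + 1 / (1 + α))
      ((((1 + α) * (1 + δ * χ) - α * δ) -
          Real.sqrt (((1 + α) * (1 + δ * χ) - α * δ) ^ 2 - 4 * δ * χ * (1 + α))) /
        (2 * δ * χ * (1 + α))) = 0 ∧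
    ∀ y ∈ Set.Icc (0:ℝ) 1,
      (0 ≤ δ * χ * y ^ 2 + (δ * (1 - χ) - δ / (1 + α) - 1) * y + 1 / (1 + α) ↔
        y ≤ (((1 + α) * (1 + δ * χ) - α * δ) -
            Real.sqrt (((1 + α) * (1 + δ * χ) - α * δ) ^ 2 - 4 * δ * χ * (1 + α))) /
          (2 * δ * χ * (1 + α))) := by
  set B := (1 + α) * (1 + δ * χ) - α * δ
  set A := δ * χ * (1 + α)
  have hA : 0 < A := mul_pos (mul_pos hδ.1 hχ.1) (by linarith)
  have hF (y : ℝ) : δ * χ * y ^ 2 + (δ * (1 - χ) - δ / (1 + α) - 1) * y + 1 / (1 + α) =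
      (A * (y * y) + -B * y + 1) / (1 + α) := by
    field_simp; ring
  have hq1 : A * (1 * 1) + -B * 1 + 1 < 0 := by
    have : A * (1 * 1) + -B * 1 + 1 = -(α * (1 - δ)) := by ring
    rw [this, neg_neg_iff_pos]
    exact mul_pos hα (sub_pos.2 hδ.2)
  have hdisc : discrim A (-B) 1 = B ^ 2 - 4 * δ * χ * (1 + α) := by rw [discrim]; ring
  have hκ : (B - √(B ^ 2 - 4 * δ * χ * (1 + α))) / (2 * δ * χ * (1 + α)) =
      lowerRoot A (-B) 1 := by
    rw [lowerRoot, hdisc, neg_neg]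
    simp only [A]
    ring
  have hd := discrim_pos_of_eval_neg hA hq1
  obtain ⟨hκ1, h1u⟩ := mem_Ioo_of_eval_neg hA hq1
  have hκ0 : 0 < lowerRoot A (-B) 1 :=
    (eval_pos_iff_lt_lowerRoot hA hd.le (by linarith)).1 (by norm_num)
  rw [hκ, ← hdisc]
  refine ⟨hd, ⟨hκ0, hκ1⟩, ?_, fun y hy => ?_⟩
  · beta_reduce
    rw [hF, eval_lowerRoot hA.ne' hd.le, zero_div]
  · rw [hF, le_div_iff₀ (by linarith), zero_mul]
    exact eval_nonneg_iff_le_lowerRoot hA hd.le (by linarith [hy.2])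
end
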